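/- Let s be a linearly recurrent binary sequence with constant C. For sufficiently large N, there exists d with 1 ≤ d ≤ C·⌊N/(C+1)⌋ such that s(i) = s(d+i) for all 0 ≤ i < ⌊N/(C+1)⌋, and consequently with D = (0,d) and M = ⌊N/(C+1)⌋ we have Σ_{n=0}^{M-1} (-1)^{s(n)+s(n+d)} = M; hence C_2(s,N) ≥ ⌊N/(C+1)⌋. -/

import Mathlib

/-- The correlation sum `V(s, M, D)` of a sequence `s`. -/
def corrV (s : ℕ → ℕ) (M : ℕ) {k : ℕ} (D : Fin k → ℕ) : ℤ :=
  ∑ n ∈ Finset.range M, (-1 : ℤ) ^ (∑ i, s (n + D i))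

/-- The `N`th correlation measure of order `k` of the sequence `s`. -/
noncomputable def corrMeasure (s : ℕ → ℕ) (k N : ℕ) : ℕ :=
  sSup {c : ℕ | ∃ M : ℕ, ∃ D : Fin k → ℕ, 0 < M ∧ StrictMono D ∧
    (∀ i, M + D i ≤ N) ∧ c = (corrV s M D).natAbs}

/-- `s` is linearly recurrent with constant `C`. -/
def LinRecN (s : ℕ → ℕ) (C : ℕ) : Prop :=
  ∀ i n : ℕ, 0 < n → ∃ j : ℕ, i < j ∧ j ≤ i + C * n ∧ ∀ m < n, s (j + m) = s (i + m)

/-! The prefix of length `M` of a linearly recurrent sequence returns within distance `C M`, so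
the pair `(0, d)` of shifts has a perfect correlation sum `M`; with `M = ⌊N/(C+1)⌋` the window
`M + d ≤ (C+1) M ≤ N` is admissible in `C_2(s, N)`. -/

lemma corrV_natAbs_le (s : ℕ → ℕ) (M : ℕ) {k : ℕ} (D : Fin k → ℕ) :
    (corrV s M D).natAbs ≤ M := by
  have h : |corrV s M D| ≤ (M : ℤ) :=
    calc |corrV s M D| ≤ ∑ n ∈ Finset.range M, |(-1 : ℤ) ^ (∑ i, s (n + D i))| :=
          Finset.abs_sum_le_sum_abs _ _
      _ = M := by simp [abs_pow]
  rw [Int.abs_eq_natAbs] at h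
  exact_mod_cast h

lemma corrV_fin_two (s : ℕ → ℕ) (M d : ℕ) :
    corrV s M ![0, d] = ∑ n ∈ Finset.range M, (-1 : ℤ) ^ (s n + s (n + d)) := by
  simp [corrV, Fin.sum_univ_two]

/-- `0 < k` is needed: for `k = 0` the set defining `corrMeasure` is unbounded, so its `sSup` is
the junk value `0`. -/
lemma natAbs_corrV_le_corrMeasure (s : ℕ → ℕ) {k N M : ℕ} (hk : 0 < k) (D : Fin k → ℕ)
    (hM : 0 < M) (hD : StrictMono D) (hMD : ∀ i, M + D i ≤ N) :
    (corrV s M D).natAbs ≤ corrMeasure s k N := by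
  refine le_csSup ⟨N, ?_⟩ ⟨M, D, hM, hD, hMD, rfl⟩
  rintro c ⟨M', D', -, -, hM'D', rfl⟩
  calc (corrV s M' D').natAbs ≤ M' := corrV_natAbs_le s M' D'
    _ ≤ N := (Nat.le_add_right _ _).trans (hM'D' ⟨0, hk⟩)

lemma sum_neg_one_pow_eq_of_shift_eq (s : ℕ → ℕ) {M d : ℕ}
    (h : ∀ n < M, s (n + d) = s n) :
    ∑ n ∈ Finset.range M, (-1 : ℤ) ^ (s n + s (n + d)) = M := by
  rw [Finset.sum_congr rfl fun n hn => by
    rw [h n (Finset.mem_range.mp hn), ← two_mul, pow_mul, neg_one_sq, one_pow]]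
  simp

lemma LinRecN.exists_prefix_return {s : ℕ → ℕ} {C : ℕ} (hlr : LinRecN s C) {M : ℕ}
    (hM : 0 < M) : ∃ d, 1 ≤ d ∧ d ≤ C * M ∧ ∀ i < M, s i = s (d + i) := by
  obtain ⟨d, hd, hdM, hrep⟩ := hlr 0 M hM
  exact ⟨d, hd, by simpa using hdM, fun i hi => by simpa using (hrep i hi).symm⟩

theorem stmt3_general (s : ℕ → ℕ) (C : ℕ)
    (hlr : LinRecN s C) :
    ∃ N₀ : ℕ, ∀ N ≥ N₀, ∃ d : ℕ, 1 ≤ d ∧ d ≤ C * (N / (C + 1)) ∧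
      (∀ i < N / (C + 1), s i = s (d + i)) ∧
      (∑ n ∈ Finset.range (N / (C + 1)), (-1 : ℤ) ^ (s n + s (n + d)))
        = (N / (C + 1) : ℕ) ∧
      N / (C + 1) ≤ corrMeasure s 2 N := by
  refine ⟨C + 1, fun N hN => ?_⟩
  set M := N / (C + 1)
  have hM : 0 < M := Nat.div_pos hN C.succ_pos
  have hMN : M * (C + 1) ≤ N := Nat.div_mul_le_self N (C + 1)
  obtain ⟨d, hd, hdM, hrep⟩ := hlr.exists_prefix_return hM
  have hsum := sum_neg_one_pow_eq_of_shift_eq s fun n hn => by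
    rw [add_comm]; exact (hrep n hn).symm
  refine ⟨d, hd, hdM, hrep, hsum, ?_⟩
  have hD : StrictMono ![0, d] := Fin.strictMono_iff_lt_succ.mpr fun i => by
    fin_cases i; simp; omega
  have hMD : ∀ i, M + ![0, d] i ≤ N := fun i => by
    fin_cases i <;> simp <;> nlinarith
  simpa [corrV_fin_two, hsum] using natAbs_corrV_le_corrMeasure s two_pos _ hM hD hMD

/-- For a linearly recurrent binary sequence `s` with constant `C` and large `N`,
the prefix of length `⌊N/(C+1)⌋` reoccurs at some shift `d ≤ C⌊N/(C+1)⌋`, the order-2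
correlation sum with `D = (0,d)` and `M = ⌊N/(C+1)⌋` equals `M`, and hence
`C_2(s,N) ≥ ⌊N/(C+1)⌋`. -/
theorem stmt3 (s : ℕ → ℕ) (hbin : ∀ n, s n ≤ 1) (C : ℕ) (hC : 0 < C)
    (hlr : LinRecN s C) :
    ∃ N₀ : ℕ, ∀ N ≥ N₀, ∃ d : ℕ, 1 ≤ d ∧ d ≤ C * (N / (C + 1)) ∧
      (∀ i < N / (C + 1), s i = s (d + i)) ∧
      (∑ n ∈ Finset.range (N / (C + 1)), (-1 : ℤ) ^ (s n + s (n + d)))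
        = (N / (C + 1) : ℕ) ∧
      N / (C + 1) ≤ corrMeasure s 2 N :=
  stmt3_general s C hlr
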